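/- For each d ≥ 3, the simplex Δ = conv{e_1, ..., e_d, (-d, -d-1, ..., -d-1)} ⊂ R^d (the last vertex having first coordinate -d and remaining coordinates -(d+1)) is reflexive, with weight vector Q = (1, d, d+1, ..., d+1) (with d+1 appearing d-1 times): i.e., 1·(-d,-d-1,...,-d-1) + d·e_1 + (d+1)·(e_2 + ... + e_d) = 0. -/

import Mathlib

/-!
Let `u i` be the vertices of a simplex and `b j` points with `u i ⬝ᵥ b j = 1 - c i δᵢⱼ`, where
`c i > 0` and `∑ i, (c i)⁻¹ = 1`. Pairing with the `b j`, which span, shows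
`∑ i, (c i)⁻¹ • u i = 0`. For `x` in the polar dual, the numbers `μ i = (1 - u i ⬝ᵥ x) / c i`
are then nonnegative, sum to `1`, and `x = ∑ i, μ i • b i`; so the polar dual is the simplex
spanned by the `b j`. The hypotheses are symmetric in `u` and `b`, so `{x | ∀ i, b i ⬝ᵥ x < 1}`
is an open neighbourhood of `0` inside the simplex spanned by the `u i`.
-/

/-- `x` is an integer (lattice) point. -/
def isInt {n : ℕ} (x : Fin n → ℝ) : Prop := ∀ j, ∃ z : ℤ, x j = (z : ℝ)

/-- `P` is a lattice polytope: the convex hull of finitely many lattice points. -/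
def isLatticePolytope {n : ℕ} (P : Set (Fin n → ℝ)) : Prop :=
  ∃ V : Finset (Fin n → ℝ), (∀ v ∈ V, isInt v) ∧ P = convexHull ℝ (V : Set (Fin n → ℝ))

/-- The polar dual `P^Δ = {y : x·y ≤ 1 for all x ∈ P}`. -/
def polarDual {n : ℕ} (P : Set (Fin n → ℝ)) : Set (Fin n → ℝ) :=
  {y : Fin n → ℝ | ∀ x ∈ P, ∑ j, x j * y j ≤ 1}

/-- A reflexive polytope (with the origin in its interior). -/
def isReflexive0 {n : ℕ} (P : Set (Fin n → ℝ)) : Prop :=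
  isLatticePolytope P ∧ (0 : Fin n → ℝ) ∈ interior P ∧ isLatticePolytope (polarDual P)

/-- A reflexive polytope in the wider sense: a lattice translate of a reflexive
polytope containing the origin in its interior. -/
def isReflexive {n : ℕ} (P : Set (Fin n → ℝ)) : Prop :=
  ∃ t : Fin n → ℝ, isInt t ∧ isReflexive0 ((fun x => x - t) '' P)


/-- The vertices `e_1, ..., e_d, (-d, -d-1, ..., -d-1)` of the simplex `Δ_Q` with
`Q = (1, d, d+1, ..., d+1)`. -/
noncomputable def dVert (d : ℕ) : Fin (d+1) → Fin d → ℝ :=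
  Fin.snoc (fun k j => if j = k then 1 else 0)
    (fun j => if (j : ℕ) = 0 then -(d : ℝ) else -(d : ℝ) - 1)

open Set

theorem mem_polarDual {n : ℕ} {S : Set (Fin n → ℝ)} {y : Fin n → ℝ} :
    y ∈ polarDual S ↔ ∀ x ∈ S, x ⬝ᵥ y ≤ 1 :=
  Iff.rfl

theorem mem_polarDual_range {ι : Type*} {n : ℕ} {u : ι → Fin n → ℝ} {y : Fin n → ℝ} :
    y ∈ polarDual (range u) ↔ ∀ i, u i ⬝ᵥ y ≤ 1 :=
  forall_mem_range

theorem convex_dotProduct_le {n : ℕ} (x : Fin n → ℝ) : Convex ℝ {y | x ⬝ᵥ y ≤ 1} :=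
  convex_halfSpace_le ⟨dotProduct_add x, fun r y => dotProduct_smul r x y⟩ 1

theorem convex_polarDual {n : ℕ} (S : Set (Fin n → ℝ)) : Convex ℝ (polarDual S) := by
  have : polarDual S = ⋂ x ∈ S, {y | x ⬝ᵥ y ≤ 1} := by ext; simp [mem_polarDual]
  exact this ▸ convex_iInter₂ fun x _ => convex_dotProduct_le x

theorem polarDual_convexHull {n : ℕ} (S : Set (Fin n → ℝ)) :
    polarDual (convexHull ℝ S) = polarDual S := by
  refine Subset.antisymm (fun y hy x hx => hy x (subset_convexHull ℝ S hx)) fun y hy => ?_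
  have : convexHull ℝ S ⊆ {x | y ⬝ᵥ x ≤ 1} :=
    convexHull_min (fun x hx => (dotProduct_comm x y ▸ mem_polarDual.1 hy x hx :))
      (convex_dotProduct_le y)
  exact mem_polarDual.2 fun x hx => dotProduct_comm y x ▸ this hx

theorem isLatticePolytope_convexHull_range {ι : Type*} [Finite ι] {n : ℕ} (u : ι → Fin n → ℝ)
    (hu : ∀ i, isInt (u i)) : isLatticePolytope (convexHull ℝ (range u)) :=
  ⟨(finite_range u).toFinset, by simpa using hu, by rw [Finite.coe_toFinset]⟩

structure IsPolarSimplexPair {ι : Type*} [Fintype ι] {n : ℕ} (u b : ι → Fin n → ℝ) (c : ι → ℝ) :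
    Prop where
  pos : ∀ i, 0 < c i
  dotProduct_self : ∀ i, u i ⬝ᵥ b i = 1 - c i
  dotProduct_of_ne : ∀ {i j}, i ≠ j → u i ⬝ᵥ b j = 1
  sum_inv : ∑ i, (c i)⁻¹ = 1
  eq_zero_of_left : ∀ y, (∀ i, u i ⬝ᵥ y = 0) → y = 0
  eq_zero_of_right : ∀ y, (∀ i, b i ⬝ᵥ y = 0) → y = 0

namespace IsPolarSimplexPair

variable {ι : Type*} [Fintype ι] {n : ℕ} {u b : ι → Fin n → ℝ} {c : ι → ℝ}

theorem symm (h : IsPolarSimplexPair u b c) : IsPolarSimplexPair b u c where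
  pos := h.pos
  dotProduct_self i := by rw [dotProduct_comm]; exact h.dotProduct_self i
  dotProduct_of_ne hij := by rw [dotProduct_comm]; exact h.dotProduct_of_ne hij.symm
  sum_inv := h.sum_inv
  eq_zero_of_left := h.eq_zero_of_right
  eq_zero_of_right := h.eq_zero_of_left

theorem sum_mul_one_sub_dotProduct (h : IsPolarSimplexPair u b c) (w : ι → ℝ) (i : ι) :
    ∑ j, w j * (1 - u i ⬝ᵥ b j) = w i * c i := by
  rw [Finset.sum_eq_single i (fun j _ hji => by rw [h.dotProduct_of_ne hji.symm, sub_self,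
    mul_zero]) (by simp), h.dotProduct_self, sub_sub_cancel]

theorem sum_inv_smul_eq_zero (h : IsPolarSimplexPair u b c) : ∑ i, (c i)⁻¹ • u i = 0 := by
  refine h.eq_zero_of_right _ fun j => ?_
  have := h.symm.sum_mul_one_sub_dotProduct (fun i => (c i)⁻¹) j
  simp only [mul_sub, mul_one, Finset.sum_sub_distrib, h.sum_inv,
    inv_mul_cancel₀ (h.pos j).ne'] at this
  simpa [dotProduct_sum, dotProduct_smul] using this

theorem convexHull_range_subset_polarDual (h : IsPolarSimplexPair u b c) :
    convexHull ℝ (range b) ⊆ polarDual (range u) := by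
  refine convexHull_min ?_ (convex_polarDual _)
  rintro _ ⟨j, rfl⟩
  refine mem_polarDual_range.2 fun i => ?_
  rcases eq_or_ne i j with rfl | hij
  · linarith [h.dotProduct_self i, h.pos i]
  · exact (h.dotProduct_of_ne hij).le

theorem polarDual_range_subset_convexHull (h : IsPolarSimplexPair u b c) :
    polarDual (range u) ⊆ convexHull ℝ (range b) := by
  intro x hx
  rw [mem_polarDual_range] at hx
  set μ : ι → ℝ := fun i => (c i)⁻¹ * (1 - u i ⬝ᵥ x)
  have hμ_nonneg : ∀ i ∈ Finset.univ, 0 ≤ μ i := fun i _ =>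
    mul_nonneg (inv_nonneg.2 (h.pos i).le) (sub_nonneg.2 (hx i))
  have hμ_sum : ∑ i, μ i = 1 := by
    have := congrArg (· ⬝ᵥ x) h.sum_inv_smul_eq_zero
    simp only [sum_dotProduct, smul_dotProduct, smul_eq_mul, zero_dotProduct] at this
    simp [μ, mul_sub, Finset.sum_sub_distrib, h.sum_inv, this]
  have hx_eq : x = ∑ i, μ i • b i := by
    refine sub_eq_zero.1 (h.eq_zero_of_left _ fun i => ?_)
    have hμc : μ i * c i = 1 - u i ⬝ᵥ x := by
      rw [mul_comm]; exact mul_inv_cancel_left₀ (h.pos i).ne' _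
    have := h.sum_mul_one_sub_dotProduct μ i
    rw [hμc] at this
    simp only [mul_sub, mul_one, Finset.sum_sub_distrib, hμ_sum] at this
    simp only [dotProduct_sub, dotProduct_sum, dotProduct_smul, smul_eq_mul]
    linarith
  rw [hx_eq]
  exact (convex_convexHull ℝ _).sum_mem hμ_nonneg hμ_sum fun i _ => subset_convexHull ℝ _ ⟨i, rfl⟩

theorem polarDual_convexHull_range (h : IsPolarSimplexPair u b c) :
    polarDual (convexHull ℝ (range u)) = convexHull ℝ (range b) := by
  rw [polarDual_convexHull]
  exact h.polarDual_range_subset_convexHull.antisymm h.convexHull_range_subset_polarDual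

theorem zero_mem_interior_convexHull_range (h : IsPolarSimplexPair u b c) :
    (0 : Fin n → ℝ) ∈ interior (convexHull ℝ (range u)) := by
  have hopen : IsOpen {x : Fin n → ℝ | ∀ i, b i ⬝ᵥ x < 1} := by
    simp only [ofPred_forall]
    exact isOpen_iInter_of_finite fun i => isOpen_lt (by fun_prop) continuous_const
  refine interior_maximal (fun x hx => h.symm.polarDual_range_subset_convexHull ?_) hopen (by simp)
  exact mem_polarDual_range.2 fun i => (hx i).le

theorem isReflexive0 (h : IsPolarSimplexPair u b c) (hu : ∀ i, isInt (u i))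
    (hb : ∀ i, isInt (b i)) : isReflexive0 (convexHull ℝ (range u)) :=
  ⟨isLatticePolytope_convexHull_range u hu, h.zero_mem_interior_convexHull_range,
    h.polarDual_convexHull_range ▸ isLatticePolytope_convexHull_range b hb⟩

end IsPolarSimplexPair

section Simplex

variable {d : ℕ}

theorem Fin.sum_ite_val_eq_zero (hd : 0 < d) (a b : ℝ) :
    ∑ k : Fin d, (if (k : ℕ) = 0 then a else b) = a + (d - 1) * b := by
  obtain ⟨m, rfl⟩ : ∃ m, d = m + 1 := ⟨d - 1, by omega⟩
  simp [Fin.sum_univ_succ]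

-- `|Q| / q i` for the weights `q = (d, d + 1, …, d + 1, 1)` of the vertices `dVert d`.
variable (d) in
noncomputable def dualScale : Fin (d + 1) → ℝ :=
  Fin.snoc (fun k : Fin d => if (k : ℕ) = 0 then (d : ℝ) + 1 else d) (d * (d + 1))

variable (d) in
noncomputable def dualVert : Fin (d + 1) → Fin d → ℝ :=
  Fin.snoc (fun k => 1 - Pi.single k (dualScale d k.castSucc)) 1

theorem dVert_castSucc (k : Fin d) : dVert d k.castSucc = Pi.single k 1 := by
  ext j
  simp [dVert, Pi.single_apply]

theorem sum_dVert_last (hd : 0 < d) : ∑ j, dVert d (Fin.last d) j = 1 - d * (d + 1) := by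
  simp only [dVert, Fin.snoc_last]
  rw [Fin.sum_ite_val_eq_zero hd]
  ring

theorem dualScale_mul_dVert_last (k : Fin d) :
    dualScale d k.castSucc * dVert d (Fin.last d) k = -(d * (d + 1)) := by
  simp only [dualScale, dVert, Fin.snoc_castSucc, Fin.snoc_last]
  split_ifs <;> ring

theorem dualScale_pos (hd : 0 < d) (i : Fin (d + 1)) : 0 < dualScale d i := by
  have : (0 : ℝ) < d := by exact_mod_cast hd
  induction i using Fin.lastCases with
  | last => simp only [dualScale, Fin.snoc_last]; positivity
  | cast k => simp only [dualScale, Fin.snoc_castSucc]; split_ifs <;> positivity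

theorem sum_inv_dualScale (hd : 0 < d) : ∑ i, (dualScale d i)⁻¹ = 1 := by
  have : (0 : ℝ) < d := by exact_mod_cast hd
  simp only [Fin.sum_univ_castSucc, dualScale, Fin.snoc_castSucc, Fin.snoc_last, apply_ite Inv.inv]
  rw [Fin.sum_ite_val_eq_zero hd]
  field_simp
  ring

theorem isPolarSimplexPair_dVert_dualVert (hd : 0 < d) :
    IsPolarSimplexPair (dVert d) (dualVert d) (dualScale d) where
  pos := dualScale_pos hd
  dotProduct_self i := by
    induction i using Fin.lastCases with
    | last => simp [dualVert, dualScale, dotProduct_one, sum_dVert_last hd]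
    | cast k => simp [dualVert, dVert_castSucc, single_dotProduct]
  dotProduct_of_ne {i j} hij := by
    induction j using Fin.lastCases with
    | last =>
      obtain ⟨k, rfl⟩ := Fin.exists_castSucc_eq.2 hij
      simp [dualVert, dVert_castSucc, dotProduct_one]
    | cast l =>
      induction i using Fin.lastCases with
      | last =>
        have := dualScale_mul_dVert_last l
        simp only [dualVert, Fin.snoc_castSucc, dotProduct_sub, dotProduct_one, sum_dVert_last hd,
          dotProduct_single]
        linarith
      | cast k =>
        simp [dualVert, dVert_castSucc, single_dotProduct, Fin.castSucc_inj.not.1 hij]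
  sum_inv := sum_inv_dualScale hd
  eq_zero_of_left y hy := by
    ext k
    simpa [dVert_castSucc, single_dotProduct] using hy k.castSucc
  eq_zero_of_right y hy := by
    have hsum : ∑ j, y j = 0 := by simpa [dualVert, one_dotProduct] using hy (Fin.last d)
    ext k
    have := hy k.castSucc
    simp only [dualVert, Fin.snoc_castSucc, sub_dotProduct, one_dotProduct, hsum, single_dotProduct,
      zero_sub, neg_eq_zero, mul_eq_zero] at this
    exact this.resolve_left (dualScale_pos hd _).ne'

theorem isInt_dVert (i : Fin (d + 1)) : isInt (dVert d i) := by
  induction i using Fin.lastCases with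
  | last => exact fun j => ⟨if (j : ℕ) = 0 then -d else -d - 1, by simp [dVert]⟩
  | cast k => exact fun j => ⟨if j = k then 1 else 0, by simp [dVert]⟩

theorem isInt_dualVert (i : Fin (d + 1)) : isInt (dualVert d i) := by
  induction i using Fin.lastCases with
  | last => exact fun j => ⟨1, by simp [dualVert]⟩
  | cast k =>
    refine fun j => ⟨1 - if j = k then (if (k : ℕ) = 0 then d + 1 else d) else 0, ?_⟩
    simp [dualVert, dualScale, Pi.single_apply]

theorem dVert_last_add_weighted_sum :
    dVert d (Fin.last d) + (d : ℝ) • (fun j : Fin d => if (j : ℕ) = 0 then (1:ℝ) else 0)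
      + ((d : ℝ) + 1) • ∑ k ∈ Finset.univ.filter (fun k : Fin d => (k : ℕ) ≠ 0),
          (fun j : Fin d => if j = k then (1:ℝ) else 0) = 0 := by
  ext j
  simp only [dVert, Fin.snoc_last, ne_eq, ite_not, Pi.add_apply, Pi.smul_apply, smul_eq_mul,
    mul_ite, mul_one, mul_zero, Finset.sum_apply, Finset.sum_ite_eq, Finset.mem_filter,
    Finset.mem_univ, true_and, Pi.zero_apply]
  split_ifs <;> ring

end Simplex

/-- For `d ≥ 3`, the simplex `Δ = conv{e_1,...,e_d,(-d,-d-1,...,-d-1)}`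
is reflexive, with weight vector `Q = (1, d, d+1, ..., d+1)`, i.e.
`1·(-d,-d-1,...,-d-1) + d·e_1 + (d+1)·(e_2 + ... + e_d) = 0`. -/
theorem stmt_11 (d : ℕ) (hd : 3 ≤ d) :
    isReflexive0 (convexHull ℝ (Set.range (dVert d))) ∧
    dVert d (Fin.last d) + (d : ℝ) • (fun j : Fin d => if (j : ℕ) = 0 then (1:ℝ) else 0)
      + ((d : ℝ) + 1) • ∑ k ∈ Finset.univ.filter (fun k : Fin d => (k : ℕ) ≠ 0),
          (fun j : Fin d => if j = k then (1:ℝ) else 0) = 0 :=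
  ⟨(isPolarSimplexPair_dVert_dualVert (by omega)).isReflexive0 isInt_dVert isInt_dualVert,
    dVert_last_add_weighted_sum⟩
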